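/- arXiv:2311.04706 — 7 statements merged into one kernel-verified Lean document; each statement's English description precedes it below -/
import Mathlib

section
/- If A is an n×n Metzler matrix (nonnegative off-diagonal entries) that is irreducible, and x : [0,∞) → ℝ^n solves dx/dt = A x with x(0) ≥ 0 and x(0) ≠ 0, then x(t) has all entries strictly positive for every t > 0. -/
open Matrix

/-- A square real matrix is Metzler if its off-diagonal entries are nonnegative. -/
def Metzler {n : ℕ} (A : Matrix (Fin n) (Fin n) ℝ) : Prop :=
  ∀ i j, i ≠ j → 0 ≤ A i j

/-- A square real matrix is irreducible if its associated directed graph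
(edge `j → i` whenever `A i j ≠ 0`, `i ≠ j`) is strongly connected. -/
def Irred {n : ℕ} (A : Matrix (Fin n) (Fin n) ℝ) : Prop :=
  ∀ i j : Fin n, i ≠ j → Relation.TransGen (fun a b : Fin n => a ≠ b ∧ A b a ≠ 0) i j

/-!
The solution is `x t = exp (t • A) *ᵥ x 0`, so it suffices that every entry of `exp (t • A)` is
positive. Shifting by a multiple of the identity, `t • A + (t * c) • 1` is entrywise nonnegative
and its exponential differs from `exp (t • A)` only by the factor `e^(t c) > 0`. For a nonnegative
matrix `M`, `exp M = ∑ Mᵏ / k!` has a positive `(i, j)` entry as soon as some power `Mᵏ` does, and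
irreducibility provides a path `j → ⋯ → i` of positive entries, hence such a power.
-/

open NormedSpace Relation
open scoped Nat

namespace Matrix

section StrictOrderedSemiring

variable {ι R : Type*} [Fintype ι] [Semiring R] [PartialOrder R] [IsStrictOrderedRing R]

lemma exists_pow_apply_pos_of_reflTransGen [DecidableEq ι] {M : Matrix ι ι R}
    (hM : ∀ i j, 0 ≤ M i j) {i j : ι} (h : ReflTransGen (fun a b => 0 < M b a) j i) :
    ∃ k, 0 < (M ^ k) i j := by
  induction h with
  | refl => exact ⟨0, by simp⟩
  | tail _ hbc ih =>
    obtain ⟨k, hk⟩ := ih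
    refine ⟨k + 1, ?_⟩
    rw [pow_succ', mul_apply]
    exact Finset.sum_pos' (fun a _ => mul_nonneg (hM _ _) (pow_apply_nonneg hM k a _))
      ⟨_, Finset.mem_univ _, mul_pos hbc hk⟩

lemma mulVec_apply_pos {M : Matrix ι ι R} (hM : ∀ i j, 0 < M i j) {v : ι → R}
    (hv : ∀ i, 0 ≤ v i) (hv0 : v ≠ 0) (i : ι) : 0 < (M *ᵥ v) i := by
  obtain ⟨j, hj⟩ := Function.ne_iff.1 hv0
  exact Finset.sum_pos' (fun k _ => mul_nonneg (hM i k).le (hv k))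
    ⟨j, Finset.mem_univ _, mul_pos (hM i j) ((hv j).lt_of_ne' hj)⟩

end StrictOrderedSemiring

section Exp

attribute [local instance] Matrix.linftyOpNormedRing Matrix.linftyOpNormedAlgebra

variable {ι : Type*} [Fintype ι] [DecidableEq ι]

lemma exp_apply_pos {M : Matrix ι ι ℝ} (hM : ∀ i j, 0 ≤ M i j) {i j : ι}
    (hk : ∃ k, 0 < (M ^ k) i j) : 0 < exp M i j := by
  obtain ⟨k, hk⟩ := hk
  have hsum : HasSum (fun n : ℕ => (n ! : ℝ)⁻¹ * (M ^ n) i j) (exp M i j) :=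
    Pi.hasSum.1 (Pi.hasSum.1 (exp_series_hasSum_exp' (𝕂 := ℝ) M) i) j
  exact hasSum_lt (f := 0) (fun n => mul_nonneg (by positivity) (pow_apply_nonneg hM n i j))
    (mul_pos (by positivity) hk) hasSum_zero hsum

lemma exp_add_smul_one (M : Matrix ι ι ℝ) (s : ℝ) :
    exp (M + s • 1) = Real.exp s • exp M := by
  have hs : exp (s • 1 : Matrix ι ι ℝ) = Real.exp s • 1 := by
    simp only [← Algebra.algebraMap_eq_smul_one, Real.exp_eq_exp_ℝ]
    exact (algebraMap_exp_comm s).symm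
  rw [exp_add_of_commute _ _ ((Commute.one_right M).smul_right s), hs, mul_smul_one]

lemma hasDerivAt_exp_smul_mulVec (A : Matrix ι ι ℝ) (v : ι → ℝ) (t : ℝ) :
    HasDerivAt (fun s : ℝ => exp (s • A) *ᵥ v) (A *ᵥ (exp (t • A) *ᵥ v)) t := by
  let L : Matrix ι ι ℝ →L[ℝ] ι → ℝ :=
    LinearMap.toContinuousLinearMap ((LinearMap.applyₗ v).comp toLin'.toLinearMap)
  rw [mulVec_mulVec]
  exact L.hasFDerivAt.comp_hasDerivAt t (hasDerivAt_exp_smul_const' (𝕂 := ℝ) A t)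

theorem eq_exp_smul_mulVec_of_hasDerivAt {A : Matrix ι ι ℝ} {x : ℝ → ι → ℝ}
    (hx : ∀ t, HasDerivAt x (A *ᵥ x t) t) (t : ℝ) : x t = exp (t • A) *ᵥ x 0 := by
  have hA : LipschitzWith _ (A *ᵥ ·) := (LinearMap.toContinuousLinearMap (toLin' A)).lipschitz
  have h := ODE_solution_unique_univ (v := fun _ => (A *ᵥ ·)) (s := fun _ => Set.univ) (t₀ := 0)
    (fun _ => hA.lipschitzOnWith) (fun t => ⟨hx t, trivial⟩)
    (fun t => ⟨hasDerivAt_exp_smul_mulVec A (x 0) t, trivial⟩) (by simp)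
  exact congrFun h t

end Exp

end Matrix

section Metzler

variable {n : ℕ} {A : Matrix (Fin n) (Fin n) ℝ}

lemma Irred.reflTransGen (h : Irred A) (i j : Fin n) :
    ReflTransGen (fun a b => a ≠ b ∧ A b a ≠ 0) i j := by
  rcases eq_or_ne i j with rfl | hij
  · exact .refl
  · exact (h i j hij).to_reflTransGen

lemma Metzler.add_smul_one_apply_nonneg (hA : Metzler A) {c : ℝ} (hc : ∀ i, -A i i ≤ c)
    (i j : Fin n) : 0 ≤ (A + c • 1) i j := by
  rcases eq_or_ne i j with rfl | hij
  · simp only [Matrix.add_apply, Matrix.smul_apply, one_apply_eq, smul_eq_mul, mul_one]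
    linarith [hc i]
  · simpa [one_apply_ne hij] using hA i j hij

lemma Metzler.add_smul_one_apply_pos (hA : Metzler A) (c : ℝ) {a b : Fin n} (hab : a ≠ b)
    (h : A b a ≠ 0) : 0 < (A + c • 1) b a := by
  simpa [one_apply_ne hab.symm] using (hA b a hab.symm).lt_of_ne' h

theorem Metzler.exp_smul_apply_pos (hA : Metzler A) (hirr : Irred A) {t : ℝ} (ht : 0 < t)
    (i j : Fin n) : 0 < exp (t • A) i j := by
  obtain ⟨c, hc⟩ := Finite.exists_le fun i => -A i i
  set B := t • (A + c • 1) with hB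
  have hB_nonneg : ∀ i j, 0 ≤ B i j := fun i j =>
    mul_nonneg ht.le (hA.add_smul_one_apply_nonneg hc i j)
  have hpath : ReflTransGen (fun a b => 0 < B b a) j i :=
    ReflTransGen.mono (fun a b (hab : a ≠ b ∧ A b a ≠ 0) =>
      mul_pos ht (hA.add_smul_one_apply_pos c hab.1 hab.2)) j i (hirr.reflTransGen j i)
  have hpos : 0 < exp B i j :=
    exp_apply_pos hB_nonneg (exists_pow_apply_pos_of_reflTransGen hB_nonneg hpath)
  rw [hB, smul_add, smul_smul, exp_add_smul_one, Matrix.smul_apply, smul_eq_mul] at hpos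
  exact pos_of_mul_pos_right hpos (Real.exp_pos _).le

end Metzler

theorem stmt0 {n : ℕ} (A : Matrix (Fin (n + 1)) (Fin (n + 1)) ℝ)
    (hM : Metzler A) (hirr : Irred A)
    (x : ℝ → Fin (n + 1) → ℝ)
    (hx : ∀ t : ℝ, HasDerivAt x (A.mulVec (x t)) t)
    (h0 : ∀ i, 0 ≤ x 0 i) (hne : x 0 ≠ 0) :
    ∀ t > (0 : ℝ), ∀ i, 0 < x t i := by
  intro t ht i
  rw [eq_exp_smul_mulVec_of_hasDerivAt hx t]
  exact mulVec_apply_pos (hM.exp_smul_apply_pos hirr ht) h0 hne i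
end

section
/- Let L be an n×n Metzler irreducible matrix with columns summing to 0. Then a positive vector δ spanning the kernel of L is given explicitly by δ_i = (-1)^{n-1} L*_{ii}, where L*_{ii} is the cofactor of the i-th diagonal entry of L; in particular each (-1)^{n-1} L*_{ii} > 0. -/
open Matrix

/-!
Since the columns of `L` sum to zero, `-L` and all its principal submatrices are weakly column
diagonally dominant, so their determinants are `≥ 0` (a limit of strictly dominant ones, whose
determinants are positive by a homotopy to the diagonal). A maximum principle along the paths
given by irreducibility shows that the principal `n × n` minors of `L` are nonzero (so those of
`-L` are positive) and that `L` has rank `n`. Finally `adj L * L = 0` makes every row of `adj L` a multiple of `1`, so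
every column of `adj L` is the vector of principal minors, and `L * adj L = 0` puts it in the
kernel.
-/

open Finset

namespace Matrix

theorem det_pos_of_sum_col_lt_diag {m : Type*} [Fintype m] [DecidableEq m]
    {B : Matrix m m ℝ} (h : ∀ k, ∑ j ∈ univ.erase k, |B j k| < B k k) : 0 < B.det := by
  have hdiag (k) : 0 < B k k := (sum_nonneg fun j _ => abs_nonneg _).trans_lt (h k)
  set D := diagonal B.diag
  let M : ℝ → Matrix m m ℝ := fun s => D + s • (B - D)
  have hM_off (s : ℝ) {j k : m} (hjk : j ≠ k) : M s j k = s * B j k := by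
    simp [M, D, hjk]
  have hM_diag (s : ℝ) (k : m) : M s k k = B k k := by simp [M, D]
  have hM_ne (s : ℝ) (hs : s ∈ Set.Icc (0 : ℝ) 1) : (M s).det ≠ 0 := by
    refine det_ne_zero_of_sum_col_lt_diag fun k => ?_
    simp only [Real.norm_eq_abs, hM_diag, abs_of_pos (hdiag k)]
    refine lt_of_le_of_lt (sum_le_sum fun j hj => ?_) (h k)
    rw [hM_off s (ne_of_mem_erase hj), abs_mul, abs_of_nonneg hs.1]
    exact mul_le_of_le_one_left (abs_nonneg _) hs.2
  have hcont : Continuous fun s => (M s).det := by fun_prop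
  have h0 : 0 < (M 0).det := by
    simpa [M, D] using prod_pos fun k _ => hdiag k
  have h1 : M 1 = B := by simp [M]
  by_contra! hB
  obtain ⟨s, hs, hs0⟩ := intermediate_value_Icc' zero_le_one hcont.continuousOn
    (show (0 : ℝ) ∈ Set.Icc (M 1).det (M 0).det from ⟨h1 ▸ hB, h0.le⟩)
  exact hM_ne s hs hs0

theorem det_nonneg_of_sum_col_le_diag {m : Type*} [Fintype m] [DecidableEq m]
    {B : Matrix m m ℝ} (h : ∀ k, ∑ j ∈ univ.erase k, |B j k| ≤ B k k) : 0 ≤ B.det := by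
  have hpos (t : ℝ) (ht : 0 < t) : 0 < (B + t • 1).det := by
    refine det_pos_of_sum_col_lt_diag fun k => ?_
    have hoff : ∀ j ∈ univ.erase k, (B + t • 1) j k = B j k := fun j hj => by
      simp [one_apply_ne (ne_of_mem_erase hj)]
    rw [sum_congr rfl fun j hj => by rw [hoff j hj]]
    simpa using (h k).trans_lt (lt_add_of_pos_right _ ht)
  have hcont : Continuous fun t : ℝ => (B + t • 1).det := by fun_prop
  have := ge_of_tendsto ((hcont.tendsto 0).mono_left nhdsWithin_le_nhds)
    (eventually_nhdsWithin_of_forall fun t (ht : t ∈ Set.Ioi 0) => (hpos t ht).le)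
  simpa using this

theorem det_eq_zero_of_sum_col_eq_zero {R : Type*} [CommRing R] [IsDomain R] {m : Type*}
    [Fintype m] [DecidableEq m] [Nonempty m] {A : Matrix m m R} (hcol : ∀ j, ∑ i, A i j = 0) :
    A.det = 0 :=
  exists_vecMul_eq_zero_iff.mp
    ⟨1, one_ne_zero, funext fun j => by simpa [vecMul, dotProduct] using hcol j⟩

theorem sum_erase_col_eq_neg_diag {R : Type*} [AddCommGroup R] {m : Type*} [Fintype m]
    [DecidableEq m] {A : Matrix m m R} (hcol : ∀ j, ∑ i, A i j = 0) (c : m) :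
    ∑ a ∈ univ.erase c, A a c = -A c c :=
  eq_neg_of_add_eq_zero_left ((sum_erase_add univ (fun a => A a c) (mem_univ c)).trans (hcol c))

theorem submatrix_mulVec_removeNth {R : Type*} [CommRing R] {n : ℕ}
    (A : Matrix (Fin (n + 1)) (Fin (n + 1)) R) (i : Fin (n + 1)) {w : Fin (n + 1) → R}
    (hw : w i = 0) :
    A.submatrix i.succAbove i.succAbove *ᵥ i.removeNth w = i.removeNth (A *ᵥ w) := by
  ext k
  simp [mulVec, dotProduct, Fin.sum_univ_succAbove _ i, hw, Fin.removeNth]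

theorem eq_smul_of_mulVec_eq_zero {K : Type*} [Field K] {n : ℕ}
    {A : Matrix (Fin (n + 1)) (Fin (n + 1)) K} {i : Fin (n + 1)}
    (hA : (A.submatrix i.succAbove i.succAbove).det ≠ 0) {v w : Fin (n + 1) → K}
    (hv : A *ᵥ v = 0) (hvi : v i ≠ 0) (hw : A *ᵥ w = 0) : w = (w i / v i) • v := by
  set u := w - (w i / v i) • v
  have hui : u i = 0 := by simp [u, hvi]
  have hu : A *ᵥ u = 0 := by simp [u, mulVec_sub, mulVec_smul, hv, hw]
  have hu' : i.removeNth u = 0 := eq_zero_of_mulVec_eq_zero hA <| by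
    rw [submatrix_mulVec_removeNth A i hui, hu]; rfl
  have : u = 0 := by
    rw [← Fin.insertNth_self_removeNth i u, hui, hu', Fin.insertNth_zero_right, Pi.single_zero]
  exact sub_eq_zero.mp this

end Matrix

namespace Metzler

variable {m : ℕ} {L : Matrix (Fin m) (Fin m) ℝ}

theorem diag_nonpos (hM : Metzler L) (hcol : ∀ j, ∑ i, L i j = 0) (c : Fin m) :
    L c c ≤ 0 := by
  have := sum_nonneg fun a (ha : a ∈ univ.erase c) => hM a c (ne_of_mem_erase ha)
  linarith [sum_erase_col_eq_neg_diag hcol c]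

theorem det_neg_submatrix_nonneg {k : ℕ} (hM : Metzler L) (hcol : ∀ j, ∑ i, L i j = 0)
    {f : Fin k → Fin m} (hf : Function.Injective f) : 0 ≤ (-L.submatrix f f).det := by
  refine det_nonneg_of_sum_col_le_diag fun c => ?_
  have hoff : ∀ j ∈ univ.erase c, |(-L.submatrix f f) j c| = L (f j) (f c) := fun j hj => by
    simpa using abs_of_nonneg (hM _ _ (hf.ne (ne_of_mem_erase hj)))
  have hsub : (univ.erase c).map ⟨f, hf⟩ ⊆ univ.erase (f c) := by
    intro a ha
    obtain ⟨j, hj, rfl⟩ := mem_map.mp ha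
    exact mem_erase.mpr ⟨hf.ne (ne_of_mem_erase hj), mem_univ _⟩
  calc ∑ j ∈ univ.erase c, |(-L.submatrix f f) j c|
      = ∑ a ∈ (univ.erase c).map ⟨f, hf⟩, L a (f c) := by
        rw [sum_congr rfl hoff, sum_map]; rfl
    _ ≤ ∑ a ∈ univ.erase (f c), L a (f c) :=
      sum_le_sum_of_subset_of_nonneg hsub fun a ha _ => hM a (f c) (ne_of_mem_erase ha)
    _ = (-L.submatrix f f) c c := by simp [sum_erase_col_eq_neg_diag hcol]

/-- Maximum principle: since `|x c|` is maximal, the chain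
`-L c c * |x c| ≤ ∑_{b ≠ c} L b c * |x b| ≤ (∑_{b ≠ c} L b c) * |x c| = -L c c * |x c|`
is an equality, term by term. -/
theorem abs_eq_of_vecMul_eq_zero (hM : Metzler L) (hcol : ∀ j, ∑ i, L i j = 0)
    {x : Fin m → ℝ} {c : Fin m} (hmax : ∀ a, |x a| ≤ |x c|) (hc : (x ᵥ* L) c = 0)
    {a : Fin m} (ha : L a c ≠ 0) : |x a| = |x c| := by
  rcases eq_or_ne a c with rfl | hac
  · rfl
  have hoff (b) (hb : b ∈ univ.erase c) : 0 ≤ L b c := hM b c (ne_of_mem_erase hb)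
  have hsplit : L c c * x c = -∑ b ∈ univ.erase c, x b * L b c := by
    have hc' : ∑ b, x b * L b c = 0 := hc
    linarith [sum_erase_add univ (fun b => x b * L b c) (mem_univ c)]
  have hbound : -L c c * |x c| ≤ ∑ b ∈ univ.erase c, |x b| * L b c :=
    calc -L c c * |x c| = |∑ b ∈ univ.erase c, x b * L b c| := by
          rw [← abs_neg (∑ b ∈ univ.erase c, x b * L b c), ← hsplit, abs_mul,
            abs_of_nonpos (diag_nonpos hM hcol c), neg_mul]
      _ ≤ ∑ b ∈ univ.erase c, |x b * L b c| := abs_sum_le_sum_abs _ _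
      _ = ∑ b ∈ univ.erase c, |x b| * L b c := sum_congr rfl fun b hb => by
          rw [abs_mul, abs_of_nonneg (hoff b hb)]
  have hgap_nonneg (b) (hb : b ∈ univ.erase c) : 0 ≤ (|x c| - |x b|) * L b c :=
    mul_nonneg (sub_nonneg.mpr (hmax b)) (hoff b hb)
  have hgap : ∑ b ∈ univ.erase c, (|x c| - |x b|) * L b c = 0 := by
    refine le_antisymm ?_ (sum_nonneg hgap_nonneg)
    simp only [sub_mul, sum_sub_distrib, ← mul_sum, sum_erase_col_eq_neg_diag hcol]
    linarith
  have := (sum_eq_zero_iff_of_nonneg hgap_nonneg).mp hgap a (mem_erase.mpr ⟨hac, mem_univ a⟩)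
  linarith [(mul_eq_zero.mp this).resolve_right ha]

theorem eq_zero_of_vecMul_eq_zero (hM : Metzler L) (hirr : Irred L)
    (hcol : ∀ j, ∑ i, L i j = 0) {x : Fin m → ℝ} {i : Fin m} (hi : x i = 0)
    (hx : ∀ c, c ≠ i → (x ᵥ* L) c = 0) : x = 0 := by
  obtain ⟨k, -, hk⟩ := exists_max_image univ (fun a => |x a|) ⟨i, mem_univ i⟩
  by_contra hx0
  have hxk : 0 < |x k| := by
    obtain ⟨a, ha⟩ := Function.ne_iff.mp hx0
    exact (abs_pos.mpr ha).trans_le (hk a (mem_univ a))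
  have hxi (b : Fin m) (hb : |x b| = |x k|) : b ≠ i := fun hbi => by
    simp [hbi, hi, ← hb] at hxk
  have hmax (b : Fin m) (hb : |x b| = |x k|) (a : Fin m) : |x a| ≤ |x b| :=
    hb ▸ hk a (mem_univ a)
  have hpath (b) (hkb : Relation.TransGen (fun a b => a ≠ b ∧ L b a ≠ 0) k b) :
      |x b| = |x k| := by
    induction hkb with
    | single h =>
      exact abs_eq_of_vecMul_eq_zero hM hcol (hmax k rfl) (hx k (hxi k rfl)) h.2
    | @tail b c _ h ih =>
      exact (abs_eq_of_vecMul_eq_zero hM hcol (hmax b ih) (hx b (hxi b ih)) h.2).trans ih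
  exact hxi i (hpath i (hirr k i (hxi k rfl))) rfl

theorem det_submatrix_succAbove_ne_zero {n : ℕ} {L : Matrix (Fin (n + 1)) (Fin (n + 1)) ℝ}
    (hM : Metzler L) (hirr : Irred L) (hcol : ∀ j, ∑ i, L i j = 0) (i : Fin (n + 1)) :
    (L.submatrix i.succAbove i.succAbove).det ≠ 0 := by
  rw [← det_transpose]
  intro hdet
  obtain ⟨y, hy, hLy⟩ := exists_mulVec_eq_zero_iff.mpr hdet
  have hx : (i.insertNth 0 y : Fin (n + 1) → ℝ) = 0 := by
    refine eq_zero_of_vecMul_eq_zero hM hirr hcol (Fin.insertNth_apply_same _ _ _) fun c hc => ?_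
    obtain ⟨k, rfl⟩ := Fin.exists_succAbove_eq hc
    have := congrFun (submatrix_mulVec_removeNth Lᵀ i (Fin.insertNth_apply_same i 0 y)) k
    rw [Fin.removeNth_insertNth, ← transpose_submatrix, hLy, Fin.removeNth, mulVec_transpose]
      at this
    exact this.symm
  have := congrArg i.removeNth hx
  rw [Fin.removeNth_insertNth] at this
  exact hy this

theorem mulVec_det_submatrix_succAbove_eq_zero {n : ℕ}
    {L : Matrix (Fin (n + 1)) (Fin (n + 1)) ℝ} (hM : Metzler L) (hirr : Irred L)
    (hcol : ∀ j, ∑ i, L i j = 0) :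
    L *ᵥ (fun i => (L.submatrix i.succAbove i.succAbove).det) = 0 := by
  have hdet : L.det = 0 := det_eq_zero_of_sum_col_eq_zero hcol
  have hone : Lᵀ *ᵥ 1 = 0 := funext fun j => by simpa [mulVec, dotProduct] using hcol j
  have hrow (p j : Fin (n + 1)) : L.adjugate p j = L.adjugate p p := by
    have hp : Lᵀ *ᵥ L.adjugate p = 0 := by
      rw [mulVec_transpose, ← mul_apply_eq_vecMul, adjugate_mul, hdet, zero_smul]; rfl
    have hsub : (Lᵀ.submatrix p.succAbove p.succAbove).det ≠ 0 := by
      rw [← transpose_submatrix, det_transpose]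
      exact det_submatrix_succAbove_ne_zero hM hirr hcol p
    simpa using congrFun (eq_smul_of_mulVec_eq_zero hsub hone one_ne_zero hp) j
  have hminor (j k : Fin (n + 1)) :
      (L.submatrix j.succAbove j.succAbove).det = L.adjugate j k := by
    rw [hrow, adjugate_fin_succ_eq_det_submatrix, ← two_mul, pow_mul, neg_one_sq, one_pow,
      one_mul]
  ext k
  simpa [mulVec, dotProduct, hminor _ k, mul_apply, hdet] using
    congrFun (congrFun (mul_adjugate L) k) k

end Metzler

theorem stmt2 {n : ℕ} (L : Matrix (Fin (n + 1)) (Fin (n + 1)) ℝ)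
    (hM : Metzler L) (hirr : Irred L) (hcol : ∀ j, ∑ i, L i j = 0)
    -- δ_i = (-1)^{(n+1)-1} · L*_{ii}, the cofactor of the i-th diagonal entry being
    -- the determinant of the matrix obtained by deleting row i and column i of L
    (δ : Fin (n + 1) → ℝ)
    (hδ : ∀ i, δ i = (-1 : ℝ) ^ n * (L.submatrix i.succAbove i.succAbove).det) :
    (∀ i, 0 < δ i) ∧ L.mulVec δ = 0 ∧
      ∀ w : Fin (n + 1) → ℝ, L.mulVec w = 0 → ∃ c : ℝ, w = c • δ := by
  have hminor := hM.det_submatrix_succAbove_ne_zero hirr hcol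
  have hpos (i) : 0 < δ i := by
    have hδi : δ i = (-L.submatrix i.succAbove i.succAbove).det := by
      rw [hδ i, det_neg, Fintype.card_fin]
    rw [hδi]
    refine (hM.det_neg_submatrix_nonneg hcol Fin.succAbove_right_injective).lt_of_ne' ?_
    rw [← hδi, hδ i]
    exact mul_ne_zero (pow_ne_zero _ (by norm_num)) (hminor i)
  have hker : L *ᵥ δ = 0 := by
    rw [show δ = (-1 : ℝ) ^ n • fun i => (L.submatrix i.succAbove i.succAbove).det
        from funext hδ, mulVec_smul, hM.mulVec_det_submatrix_succAbove_eq_zero hirr hcol,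
      smul_zero]
  exact ⟨hpos, hker, fun w hw =>
    ⟨w 0 / δ 0, eq_smul_of_mulVec_eq_zero (hminor 0) hker (hpos 0).ne' hw⟩⟩
end

section
/- Let L be an n×n Metzler irreducible matrix with columns summing to 0, and let p be the positive vector with L p = 0 and ∑_i p_i = 1. Define h(x) = ∑_i (L x)_i · p_i / x_i for x with positive entries. Then h(x) ≥ 0 for every x ∈ ℝ^n with all entries strictly positive. -/
/-!
Writing `y = x / p` and `M = L · diag p`, the sum becomes `∑ᵢⱼ Mᵢⱼ yⱼ / yᵢ`, where `M` is Metzler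
with vanishing row sums (`L p = 0`) and column sums (those of `L`). Both sums vanishing make
`∑ᵢⱼ Mᵢⱼ (log yⱼ - log yᵢ + 1) = 0`, and `log r + 1 ≤ r` bounds this termwise by the sum in
question: off the diagonal because `Mᵢⱼ ≥ 0`, on it because `yᵢ / yᵢ = 1`.
-/

open Matrix

theorem mul_log_div_add_one_le {ι : Type*} (M : Matrix ι ι ℝ) {i j : ι} (hM : i ≠ j → 0 ≤ M i j)
    {y : ι → ℝ} (hy : ∀ i, 0 < y i) :
    M i j * (Real.log (y j / y i) + 1) ≤ M i j * (y j / y i) := by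
  rcases eq_or_ne i j with rfl | hij
  · simp [div_self (hy i).ne']
  · exact mul_le_mul_of_nonneg_left
      (by linarith [Real.log_le_sub_one_of_pos (div_pos (hy j) (hy i))]) (hM hij)

section ZeroMarginals

variable {ι : Type*} [Fintype ι] (M : Matrix ι ι ℝ)

theorem sum_sum_mul_sub_eq_zero (hrow : ∀ i, ∑ j, M i j = 0) (hcol : ∀ j, ∑ i, M i j = 0)
    (u : ι → ℝ) : ∑ i, ∑ j, M i j * (u j - u i) = 0 := by
  simp only [mul_sub, Finset.sum_sub_distrib]
  rw [Finset.sum_comm]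
  simp [← Finset.sum_mul, hrow, hcol]

theorem sum_sum_mul_div_nonneg (hM : ∀ i j, i ≠ j → 0 ≤ M i j) (hrow : ∀ i, ∑ j, M i j = 0)
    (hcol : ∀ j, ∑ i, M i j = 0) {y : ι → ℝ} (hy : ∀ i, 0 < y i) :
    0 ≤ ∑ i, ∑ j, M i j * (y j / y i) := by
  have hlog : ∀ i j, Real.log (y j / y i) = Real.log (y j) - Real.log (y i) := fun i j =>
    Real.log_div (hy j).ne' (hy i).ne'
  calc (0 : ℝ) = ∑ i, ∑ j, M i j * (Real.log (y j / y i) + 1) := by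
        simp only [hlog, mul_add, mul_one, Finset.sum_add_distrib, hrow,
          sum_sum_mul_sub_eq_zero M hrow hcol, add_zero]
    _ ≤ ∑ i, ∑ j, M i j * (y j / y i) :=
        Finset.sum_le_sum fun i _ => Finset.sum_le_sum fun j _ =>
          mul_log_div_add_one_le M (hM i j) hy

end ZeroMarginals

theorem stmt3_general {n : ℕ} (L : Matrix (Fin (n + 1)) (Fin (n + 1)) ℝ)
    (hM : Metzler L) (hcol : ∀ j, ∑ i, L i j = 0)
    (p : Fin (n + 1) → ℝ) (hp : ∀ i, 0 < p i) (hLp : L.mulVec p = 0)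
    (x : Fin (n + 1) → ℝ) (hx : ∀ i, 0 < x i) :
    0 ≤ ∑ i, (L.mulVec x) i * p i / x i := by
  have hrescale : ∑ i, (L.mulVec x) i * p i / x i
      = ∑ i, ∑ j, L i j * p j * ((x j / p j) / (x i / p i)) := by
    refine Finset.sum_congr rfl fun i _ => ?_
    rw [mulVec, dotProduct, Finset.sum_mul, Finset.sum_div]
    refine Finset.sum_congr rfl fun j _ => ?_
    field_simp [(hp i).ne', (hp j).ne', (hx i).ne']
  rw [hrescale]
  refine sum_sum_mul_div_nonneg (fun i j => L i j * p j) ?_ ?_ ?_ fun i => div_pos (hx i) (hp i)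
  · exact fun i j hij => mul_nonneg (hM i j hij) (hp j).le
  · intro i
    simpa [mulVec, dotProduct] using congrFun hLp i
  · intro j
    simp [← Finset.sum_mul, hcol]

theorem stmt3 {n : ℕ} (L : Matrix (Fin (n + 1)) (Fin (n + 1)) ℝ)
    (hM : Metzler L) (hirr : Irred L) (hcol : ∀ j, ∑ i, L i j = 0)
    (p : Fin (n + 1) → ℝ) (hp : ∀ i, 0 < p i) (hLp : L.mulVec p = 0)
    (hps : ∑ i, p i = 1)
    (x : Fin (n + 1) → ℝ) (hx : ∀ i, 0 < x i) :
    0 ≤ ∑ i, (L.mulVec x) i * p i / x i :=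
  stmt3_general L hM hcol p hp hLp x hx
end

section
/- Let R be the transpose of a Metzler irreducible matrix L with columns summing to 0, and let p > 0 satisfy L p = 0. Then for every vector x with positive entries, 0 ≤ ⟨p, (R x)/x⟩, where ((R x)/x)_i = (R x)_i / x_i. -/
/-! With `R = Lᵀ`, whose rows sum to zero and whose off-diagonal entries are nonnegative,
concavity of the logarithm gives `(R log x)ᵢ ≤ (R x)ᵢ / xᵢ` in every coordinate. Pairing with
`p > 0` preserves this, and `⟨p, R log x⟩ = ⟨L p, log x⟩ = 0`. -/

open Matrix

lemma Real.log_sub_log_le_sub_div {a b : ℝ} (ha : 0 < a) (hb : 0 < b) :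
    Real.log b - Real.log a ≤ (b - a) / a := by
  rw [← Real.log_div hb.ne' ha.ne', sub_div, div_self ha.ne']
  exact Real.log_le_sub_one_of_pos (div_pos hb ha)

lemma Metzler.transpose {n : ℕ} {A : Matrix (Fin n) (Fin n) ℝ} (hA : Metzler A) :
    Metzler Aᵀ :=
  fun i j hij => hA j i hij.symm

lemma Metzler.mulVec_log_le_mulVec_div {n : ℕ} {A : Matrix (Fin n) (Fin n) ℝ}
    (hA : Metzler A) (hrow : ∀ i, ∑ j, A i j = 0) {x : Fin n → ℝ} (hx : ∀ i, 0 < x i)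
    (i : Fin n) : (A *ᵥ fun j => Real.log (x j)) i ≤ (A *ᵥ x) i / x i := by
  calc (A *ᵥ fun j => Real.log (x j)) i
      = ∑ j, A i j * (Real.log (x j) - Real.log (x i)) := by
        simp only [mulVec, dotProduct, mul_sub, Finset.sum_sub_distrib, ← Finset.sum_mul, hrow,
          zero_mul, sub_zero]
    _ ≤ ∑ j, A i j * ((x j - x i) / x i) := by
        refine Finset.sum_le_sum fun j _ => ?_
        rcases eq_or_ne j i with rfl | hji
        · simp
        · exact mul_le_mul_of_nonneg_left (Real.log_sub_log_le_sub_div (hx i) (hx j))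
            (hA i j hji.symm)
    _ = (A *ᵥ x) i / x i := by
        simp only [mulVec, dotProduct, mul_div_assoc', ← Finset.sum_div, mul_sub,
          Finset.sum_sub_distrib, ← Finset.sum_mul, hrow, zero_mul, sub_zero]

theorem stmt4_general {n : ℕ} (L : Matrix (Fin (n + 1)) (Fin (n + 1)) ℝ)
    (hM : Metzler L) (hcol : ∀ j, ∑ i, L i j = 0)
    (p : Fin (n + 1) → ℝ) (hp : ∀ i, 0 < p i) (hLp : L.mulVec p = 0)
    (x : Fin (n + 1) → ℝ) (hx : ∀ i, 0 < x i) :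
    0 ≤ ∑ i, p i * ((Lᵀ.mulVec x) i / x i) := by
  have hlog := hM.transpose.mulVec_log_le_mulVec_div hcol hx
  calc (0 : ℝ) = p ⬝ᵥ (Lᵀ *ᵥ fun j => Real.log (x j)) := by
        rw [dotProduct_mulVec, vecMul_transpose, hLp, zero_dotProduct]
    _ ≤ ∑ i, p i * ((Lᵀ *ᵥ x) i / x i) :=
        Finset.sum_le_sum fun i _ => mul_le_mul_of_nonneg_left (hlog i) (hp i).le

theorem stmt4 {n : ℕ} (L : Matrix (Fin (n + 1)) (Fin (n + 1)) ℝ)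
    (hM : Metzler L) (hirr : Irred L) (hcol : ∀ j, ∑ i, L i j = 0)
    (p : Fin (n + 1) → ℝ) (hp : ∀ i, 0 < p i) (hLp : L.mulVec p = 0)
    (x : Fin (n + 1) → ℝ) (hx : ∀ i, 0 < x i) :
    0 ≤ ∑ i, p i * ((Lᵀ.mulVec x) i / x i) :=
  stmt4_general L hM hcol p hp hLp x hx
end

section
/- Let R̄ = diag(r̄_1,…,r̄_n) be a constant diagonal matrix and L̄ a Metzler irreducible matrix with columns summing to 0 and normalized kernel vector q > 0 (L̄ q = 0, ∑ q_i = 1). Then λ_max(R̄ + m L̄) → ∑_i q_i r̄_i as m → ∞. -/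
open Matrix

noncomputable def specAbscissa {n : ℕ} (A : Matrix (Fin n) (Fin n) ℝ) : ℝ :=
  sSup {t : ℝ | ∃ μ : ℂ, (A.map (fun a => (a : ℂ))).charpoly.IsRoot μ ∧ t = μ.re}

/-!
Write `S = ∑ qᵢ rᵢ` and `A_m = diag r + m L`. Since `L` is Metzler and irreducible, `ker L = ℝ q`,
so `L` has rank `n` and both `Lᵀ u = S - r` and `L u' = (S - r) ∘ q` are solvable (the right-hand
sides are orthogonal to `q`, resp. `1`). For large `m` the vectors `w = 1 + u / m` and
`v = q + u' / m` are positive and satisfy `wᵀ A_m ≤ (S + ε) wᵀ` and `A_m v ≥ (S - ε) v`.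

These are Collatz–Wielandt bounds. Shifting `A_m` by `s` makes it entrywise nonnegative. A positive
left sub-eigenvector then bounds `‖μ + s‖` for every eigenvalue `μ` (triangle inequality on an
eigenvector). A positive right super-eigenvector bounds the spectral radius of `A_m + s` from
below (Gelfand's formula). Since `‖μ + s‖ - s → Re μ` as `s → ∞`, the second bound yields an
eigenvalue with `Re μ ≥ S - ε`.
-/

open Filter Topology

namespace Matrix

variable {ι : Type*} [Fintype ι]

theorem exists_mulVec_eq_smul_of_mem_spectrum [DecidableEq ι] {K : Type*} [Field K]
    {A : Matrix ι ι K} {μ : K} (hμ : μ ∈ spectrum K A) : ∃ x, x ≠ 0 ∧ A *ᵥ x = μ • x := by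
  rw [← spectrum_toLin', ← Module.End.hasEigenvalue_iff_mem_spectrum] at hμ
  obtain ⟨x, hx⟩ := hμ.exists_hasEigenvector
  exact ⟨x, hx.2, by simpa [toLin'_apply] using Module.End.mem_eigenspace_iff.1 hx.1⟩

theorem spectrum_nonempty [DecidableEq ι] [Nonempty ι] {K : Type*} [Field K] [IsAlgClosed K]
    (A : Matrix ι ι K) : (spectrum K A).Nonempty :=
  (Module.End.exists_eigenvalue (toLin' A)).imp fun _ hμ => spectrum_toLin' A ▸ hμ.mem_spectrum

theorem add_mem_spectrum_map_ofReal_add_smul_one_iff [DecidableEq ι] {A : Matrix ι ι ℝ} {μ : ℂ}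
    {s : ℝ} :
    μ + s ∈ spectrum ℂ ((A + s • 1).map (fun a => (a : ℂ))) ↔
      μ ∈ spectrum ℂ (A.map (fun a => (a : ℂ))) := by
  have : (A + s • 1).map (fun a => (a : ℂ)) = algebraMap ℂ _ s + A.map (fun a => (a : ℂ)) := by
    ext i j
    rcases eq_or_ne i j with rfl | hij
    · simp [algebraMap_eq_diagonal, add_comm]
    · simp [algebraMap_eq_diagonal, one_apply_ne hij, diagonal_apply_ne _ hij]
  rw [this, spectrum.add_mem_add_iff]

theorem exists_mulVec_eq_of_card_eq_rank_add_one {K : Type*} [Field K] {A : Matrix ι ι K}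
    (hA : Fintype.card ι = A.rank + 1) {w : ι → K} (hw0 : w ≠ 0) (hw : w ᵥ* A = 0) {d : ι → K}
    (hd : w ⬝ᵥ d = 0) : ∃ u, A *ᵥ u = d := by
  classical
  set φ := dotProductBilin K K w
  have hle : LinearMap.range A.mulVecLin ≤ LinearMap.ker φ := by
    rintro _ ⟨u, rfl⟩
    simp [φ, dotProduct_mulVec, hw]
  have hlt : Module.finrank K (LinearMap.ker φ) < Fintype.card ι := by
    obtain ⟨i, hi⟩ := Function.ne_iff.1 hw0
    refine Module.finrank_fintype_fun_eq_card K (η := ι) ▸ Submodule.finrank_lt fun htop => hi ?_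
    have : Pi.single i 1 ∈ LinearMap.ker φ := htop ▸ Submodule.mem_top
    simpa [φ] using this
  have heq := Submodule.eq_of_le_of_finrank_le hle (by rw [← rank]; omega)
  obtain ⟨u, hu⟩ : d ∈ LinearMap.range A.mulVecLin := heq ▸ hd
  exact ⟨u, hu⟩

theorem mulVec_le_mulVec_of_nonneg {B : Matrix ι ι ℝ} (hB : ∀ i j, 0 ≤ B i j) {x y : ι → ℝ}
    (hxy : x ≤ y) : B *ᵥ x ≤ B *ᵥ y := fun i =>
  Finset.sum_le_sum fun j _ => mul_le_mul_of_nonneg_left (hxy j) (hB i j)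

theorem pow_smul_le_pow_mulVec [DecidableEq ι] {B : Matrix ι ι ℝ} (hB : ∀ i j, 0 ≤ B i j)
    {v : ι → ℝ} {ρ : ℝ} (hρ : 0 ≤ ρ) (h : ρ • v ≤ B *ᵥ v) (k : ℕ) :
    ρ ^ k • v ≤ (B ^ k) *ᵥ v := by
  induction k with
  | zero => simp
  | succ k ih =>
    calc ρ ^ (k + 1) • v = ρ ^ k • (ρ • v) := by rw [pow_succ, mul_smul]
      _ ≤ ρ ^ k • (B *ᵥ v) := smul_le_smul_of_nonneg_left h (pow_nonneg hρ k)
      _ = B *ᵥ (ρ ^ k • v) := (mulVec_smul _ _ _).symm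
      _ ≤ B *ᵥ ((B ^ k) *ᵥ v) := mulVec_le_mulVec_of_nonneg hB ih
      _ = (B ^ (k + 1)) *ᵥ v := by rw [mulVec_mulVec, pow_succ']

theorem norm_mul_norm_le_mulVec_norm {B : Matrix ι ι ℝ} (hB : ∀ i j, 0 ≤ B i j) {μ : ℂ}
    {x : ι → ℂ} (hx : B.map (fun a => (a : ℂ)) *ᵥ x = μ • x) (i : ι) :
    ‖μ‖ * ‖x i‖ ≤ (B *ᵥ fun j => ‖x j‖) i := by
  calc ‖μ‖ * ‖x i‖ = ‖∑ j, (B i j : ℂ) * x j‖ := by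
        rw [← norm_mul, ← smul_eq_mul, ← Pi.smul_apply μ x i, ← hx]; rfl
    _ ≤ ∑ j, ‖(B i j : ℂ) * x j‖ := norm_sum_le _ _
    _ = (B *ᵥ fun j => ‖x j‖) i := by
        simp [mulVec, dotProduct, Complex.norm_real, abs_of_nonneg (hB _ _)]

theorem norm_le_of_vecMul_le [DecidableEq ι] {B : Matrix ι ι ℝ} (hB : ∀ i j, 0 ≤ B i j)
    {w : ι → ℝ} (hw : ∀ i, 0 < w i) {ρ : ℝ} (h : w ᵥ* B ≤ ρ • w) {μ : ℂ}
    (hμ : μ ∈ spectrum ℂ (B.map (fun a => (a : ℂ)))) : ‖μ‖ ≤ ρ := by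
  obtain ⟨x, hx0, hx⟩ := exists_mulVec_eq_smul_of_mem_spectrum hμ
  set y : ι → ℝ := fun j => ‖x j‖
  have hy : 0 < w ⬝ᵥ y := by
    obtain ⟨i, hi⟩ := Function.ne_iff.1 hx0
    exact Finset.sum_pos' (fun j _ => mul_nonneg (hw j).le (norm_nonneg _))
      ⟨i, Finset.mem_univ _, mul_pos (hw i) (norm_pos_iff.2 hi)⟩
  refine le_of_mul_le_mul_right ?_ hy
  calc ‖μ‖ * (w ⬝ᵥ y) = w ⬝ᵥ (‖μ‖ • y) := by rw [dotProduct_smul, smul_eq_mul]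
    _ ≤ w ⬝ᵥ (B *ᵥ y) := dotProduct_le_dotProduct_of_nonneg_left
        (norm_mul_norm_le_mulVec_norm hB hx) fun i => (hw i).le
    _ = (w ᵥ* B) ⬝ᵥ y := dotProduct_mulVec _ _ _
    _ ≤ (ρ • w) ⬝ᵥ y := dotProduct_le_dotProduct_of_nonneg_right h fun _ => norm_nonneg _
    _ = ρ * (w ⬝ᵥ y) := by rw [smul_dotProduct, smul_eq_mul]

section LinftyOpNorm

attribute [local instance] Matrix.linftyOpNormedRing Matrix.linftyOpNormedAlgebra

variable [DecidableEq ι]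

theorem linfty_opNNNorm_map_ofReal (M : Matrix ι ι ℝ) :
    ‖M.map (fun a => (a : ℂ))‖₊ = ‖M‖₊ := by
  simp only [linfty_opNNNorm_def, map_apply, Complex.nnnorm_real]

variable [Nonempty ι]

theorem pow_le_linfty_opNorm_pow {B : Matrix ι ι ℝ} (hB : ∀ i j, 0 ≤ B i j) {v : ι → ℝ}
    (hv : ∀ i, 0 < v i) {ρ : ℝ} (hρ : 0 ≤ ρ) (h : ρ • v ≤ B *ᵥ v) (k : ℕ) :
    ρ ^ k ≤ ‖B ^ k‖ := by
  obtain ⟨i, hi⟩ := Finite.exists_max v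
  have hvi : ‖v‖ = v i := by
    refine le_antisymm (pi_norm_le_iff_of_nonneg (hv i).le |>.2 fun j => ?_) ?_
    · rw [Real.norm_of_nonneg (hv j).le]; exact hi j
    · exact (Real.le_norm_self _).trans (norm_le_pi_norm v i)
  refine le_of_mul_le_mul_right ?_ (hvi ▸ hv i)
  calc ρ ^ k * ‖v‖ = (ρ ^ k • v) i := by rw [hvi]; rfl
    _ ≤ ((B ^ k) *ᵥ v) i := pow_smul_le_pow_mulVec hB hρ h k i
    _ ≤ ‖(B ^ k) *ᵥ v‖ := (Real.le_norm_self _).trans (norm_le_pi_norm _ i)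
    _ ≤ ‖B ^ k‖ * ‖v‖ := linfty_opNorm_mulVec _ _

theorem exists_le_norm_of_le_mulVec {B : Matrix ι ι ℝ} (hB : ∀ i j, 0 ≤ B i j) {v : ι → ℝ}
    (hv : ∀ i, 0 < v i) {ρ : ℝ} (hρ : 0 ≤ ρ) (h : ρ • v ≤ B *ᵥ v) :
    ∃ μ ∈ spectrum ℂ (B.map (fun a => (a : ℂ))), ρ ≤ ‖μ‖ := by
  set Bc := B.map (fun a => (a : ℂ))
  obtain ⟨μ, hμ, hnorm⟩ := spectrum.exists_nnnorm_eq_spectralRadius_of_nonempty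
    (spectrum_nonempty Bc)
  refine ⟨μ, hμ, ?_⟩
  have hgelfand : ENNReal.ofReal ρ ≤ spectralRadius ℂ Bc := by
    refine ge_of_tendsto (spectrum.pow_nnnorm_pow_one_div_tendsto_nhds_spectralRadius Bc) ?_
    filter_upwards [eventually_ne_atTop 0] with k hk
    have hBk : Bc ^ k = (B ^ k).map (fun a => (a : ℂ)) :=
      (map_pow Complex.ofRealHom.mapMatrix B k).symm
    rw [hBk, linfty_opNNNorm_map_ofReal, one_div, ← ENNReal.pow_rpow_inv_natCast hk (ENNReal.ofReal ρ),
      ← ENNReal.ofReal_pow hρ]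
    gcongr
    rw [← ENNReal.ofReal_coe_nnreal, coe_nnnorm]
    exact ENNReal.ofReal_le_ofReal (pow_le_linfty_opNorm_pow hB hv hρ h k)
  rw [← hnorm] at hgelfand
  simpa using (ENNReal.ofReal_le_iff_le_toReal ENNReal.coe_ne_top).1 hgelfand

end LinftyOpNorm

end Matrix

theorem Complex.eventually_norm_add_lt {μ : ℂ} {c : ℝ} (h : μ.re < c) :
    ∀ᶠ s : ℝ in atTop, ‖μ + s‖ < c + s := by
  filter_upwards [eventually_gt_atTop (-c), eventually_gt_atTop
    ((μ.im ^ 2 / (c - μ.re) - c - μ.re) / 2)] with s hs₁ hs₂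
  have hsq : μ.im ^ 2 < (c - μ.re) * (c + μ.re + 2 * s) :=
    (div_lt_iff₀' (by linarith)).1 (by linarith)
  refine lt_of_pow_lt_pow_left₀ 2 (by linarith) ?_
  rw [Complex.sq_norm, Complex.normSq_apply]
  simp only [Complex.add_re, Complex.ofReal_re, Complex.add_im, Complex.ofReal_im, add_zero]
  nlinarith

theorem eventually_forall_pos_add_inv_mul {ι : Type*} [Finite ι] {c : ι → ℝ}
    (hc : ∀ i, 0 < c i) (b : ι → ℝ) : ∀ᶠ m : ℝ in atTop, ∀ i, 0 < c i + m⁻¹ * b i := by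
  refine eventually_all.2 fun i => ?_
  have : Tendsto (fun m : ℝ => c i + m⁻¹ * b i) atTop (𝓝 (c i)) := by
    simpa using tendsto_const_nhds.add (tendsto_inv_atTop_zero.mul_const (b i))
  exact this.eventually (eventually_gt_nhds (hc i))

section SpecAbscissa

variable {n : ℕ}

theorem specAbscissa_eq_sSup (A : Matrix (Fin n) (Fin n) ℝ) :
    specAbscissa A = sSup (Complex.re '' spectrum ℂ (A.map (fun a => (a : ℂ)))) := by
  simp only [specAbscissa, mem_spectrum_iff_isRoot_charpoly, Set.image, eq_comm]

theorem re_le_specAbscissa {A : Matrix (Fin n) (Fin n) ℝ} {μ : ℂ}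
    (hμ : μ ∈ spectrum ℂ (A.map (fun a => (a : ℂ)))) : μ.re ≤ specAbscissa A := by
  rw [specAbscissa_eq_sSup]
  exact le_csSup ((finite_spectrum _).image _).bddAbove (Set.mem_image_of_mem _ hμ)

theorem specAbscissa_le {A : Matrix (Fin (n + 1)) (Fin (n + 1)) ℝ} {c : ℝ}
    (h : ∀ μ ∈ spectrum ℂ (A.map (fun a => (a : ℂ))), μ.re ≤ c) : specAbscissa A ≤ c := by
  rw [specAbscissa_eq_sSup]
  exact csSup_le ((spectrum_nonempty _).image _) (Set.forall_mem_image.2 h)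

end SpecAbscissa

section Metzler

variable {n : ℕ} {A : Matrix (Fin n) (Fin n) ℝ}

theorem neg_diag_le_sum_abs_diag (A : Matrix (Fin n) (Fin n) ℝ) (i : Fin n) :
    -A i i ≤ ∑ j, |A j j| :=
  (neg_le_abs _).trans (Finset.single_le_sum (f := fun j => |A j j|) (fun _ _ => abs_nonneg _)
    (Finset.mem_univ i))

theorem Metzler.nonneg_add_smul_one (hA : Metzler A) {s : ℝ} (hs : ∀ i, -A i i ≤ s)
    (i j : Fin n) : 0 ≤ (A + s • 1) i j := by
  rcases eq_or_ne i j with rfl | hij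
  · simpa [neg_le_iff_add_nonneg'] using hs i
  · simpa [one_apply_ne hij] using hA i j hij

theorem Metzler.diagonal_add_smul (hA : Metzler A) (r : Fin n → ℝ) {m : ℝ} (hm : 0 ≤ m) :
    Metzler (diagonal r + m • A) := fun i j hij => by
  simpa [diagonal_apply_ne _ hij] using mul_nonneg hm (hA i j hij)

theorem Metzler.re_le_of_vecMul_le (hA : Metzler A) {w : Fin n → ℝ} (hw : ∀ i, 0 < w i)
    {c : ℝ} (h : w ᵥ* A ≤ c • w) {μ : ℂ} (hμ : μ ∈ spectrum ℂ (A.map (fun a => (a : ℂ)))) :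
    μ.re ≤ c := by
  set s := ∑ j, |A j j|
  have hshift : w ᵥ* (A + s • 1) ≤ (c + s) • w := by
    rw [vecMul_add, vecMul_smul, vecMul_one, add_smul]
    exact add_le_add_left h _
  have := norm_le_of_vecMul_le (hA.nonneg_add_smul_one (neg_diag_le_sum_abs_diag A)) hw hshift
    (add_mem_spectrum_map_ofReal_add_smul_one_iff.2 hμ)
  have hre := Complex.re_le_norm (μ + s)
  simp only [Complex.add_re, Complex.ofReal_re] at hre
  linarith

theorem Metzler.exists_le_re_of_le_mulVec {A : Matrix (Fin (n + 1)) (Fin (n + 1)) ℝ}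
    (hA : Metzler A) {v : Fin (n + 1) → ℝ} (hv : ∀ i, 0 < v i) {c : ℝ} (h : c • v ≤ A *ᵥ v) :
    ∃ μ ∈ spectrum ℂ (A.map (fun a => (a : ℂ))), c ≤ μ.re := by
  by_contra! hlt
  obtain ⟨s, hs, hsc, hsmall⟩ := ((eventually_ge_atTop (∑ j, |A j j|)).and
    ((eventually_ge_atTop (-c)).and (((finite_spectrum _).eventually_all).2
      fun μ hμ => Complex.eventually_norm_add_lt (hlt μ hμ)))).exists
  have hshift : (c + s) • v ≤ (A + s • 1) *ᵥ v := by
    rw [add_mulVec, smul_mulVec, one_mulVec, add_smul]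
    exact add_le_add_left h _
  obtain ⟨μ, hμ, hle⟩ := exists_le_norm_of_le_mulVec
    (hA.nonneg_add_smul_one fun i => (neg_diag_le_sum_abs_diag A i).trans hs) hv
    (by linarith) hshift
  rw [← sub_add_cancel μ s, add_mem_spectrum_map_ofReal_add_smul_one_iff] at hμ
  have := hsmall _ hμ
  rw [sub_add_cancel] at this
  linarith

theorem Metzler.eq_zero_of_nonneg_of_mulVec_eq_zero (hA : Metzler A) (hirr : Irred A)
    {y : Fin n → ℝ} (hy : 0 ≤ y) (hAy : A *ᵥ y = 0) {k : Fin n} (hk : y k = 0) : y = 0 := by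
  have step : ∀ i j, A i j ≠ 0 → y i = 0 → y j = 0 := by
    intro i j hij hi
    have hrow : ∑ l, A i l * y l = 0 := congrFun hAy i
    have hterm := (Finset.sum_eq_zero_iff_of_nonneg fun l _ => ?_).1 hrow j (Finset.mem_univ _)
    · exact (mul_eq_zero.1 hterm).resolve_left hij
    · rcases eq_or_ne i l with rfl | hil
      · simp [hi]
      · exact mul_nonneg (hA i l hil) (hy l)
  have reach : ∀ a b, Relation.TransGen (fun a b => a ≠ b ∧ A b a ≠ 0) a b →
      y b = 0 → y a = 0 := by
    intro a b hab
    induction hab with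
    | single h => exact step _ _ h.2
    | tail _ h ih => exact fun hc => ih (step _ _ h.2 hc)
  funext j
  rcases eq_or_ne j k with rfl | hjk
  · exact hk
  · exact reach j k (hirr j k hjk) hk

theorem Metzler.ker_mulVecLin_eq_span (hA : Metzler A) (hirr : Irred A) {q : Fin n → ℝ}
    (hq : ∀ i, 0 < q i) (hAq : A *ᵥ q = 0) : LinearMap.ker A.mulVecLin = ℝ ∙ q := by
  refine le_antisymm (fun x hx => ?_) ((Submodule.span_singleton_le_iff_mem _ _).2 hAq)
  rcases isEmpty_or_nonempty (Fin n) with hn | hn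
  · simp [Subsingleton.elim x 0]
  obtain ⟨k, hk⟩ := Finite.exists_min fun i => x i / q i
  have hy : 0 ≤ x - (x k / q k) • q := fun i => by
    simpa [sub_nonneg] using (le_div_iff₀ (hq i)).1 (hk i)
  have hAy : A *ᵥ (x - (x k / q k) • q) = 0 := by
    rw [mulVec_sub, mulVec_smul, hAq, smul_zero, sub_zero]; exact hx
  have hzero := hA.eq_zero_of_nonneg_of_mulVec_eq_zero hirr hy hAy (k := k) (by
    simp [div_mul_cancel₀ _ (hq k).ne'])
  exact Submodule.mem_span_singleton.2 ⟨x k / q k, (sub_eq_zero.1 hzero).symm⟩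

theorem Metzler.rank_eq {A : Matrix (Fin (n + 1)) (Fin (n + 1)) ℝ} (hA : Metzler A)
    (hirr : Irred A) {q : Fin (n + 1) → ℝ} (hq : ∀ i, 0 < q i) (hAq : A *ᵥ q = 0) :
    A.rank = n := by
  have hker := finrank_span_singleton (K := ℝ) (v := q) fun h => (hq 0).ne' (congrFun h 0)
  rw [← hA.ker_mulVecLin_eq_span hirr hq hAq] at hker
  have := LinearMap.finrank_range_add_finrank_ker A.mulVecLin
  rw [hker, Module.finrank_fintype_fun_eq_card, Fintype.card_fin] at this
  rw [rank]
  omega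

end Metzler

section Asymptotics

variable {n : ℕ} {r : Fin (n + 1) → ℝ} {L : Matrix (Fin (n + 1)) (Fin (n + 1)) ℝ}
  {q : Fin (n + 1) → ℝ}

theorem const_one_vecMul_eq_zero (hcol : ∀ j, ∑ i, L i j = 0) : (fun _ => (1 : ℝ)) ᵥ* L = 0 :=
  funext fun j => by simpa [vecMul, dotProduct] using hcol j

theorem eventually_le_specAbscissa (hM : Metzler L) (hirr : Irred L)
    (hcol : ∀ j, ∑ i, L i j = 0) (hq : ∀ i, 0 < q i) (hLq : L *ᵥ q = 0) (hqs : ∑ i, q i = 1)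
    {a : ℝ} (ha : a < ∑ i, q i * r i) :
    ∀ᶠ m : ℝ in atTop, a ≤ specAbscissa (diagonal r + m • L) := by
  set S := ∑ i, q i * r i
  obtain ⟨u, hu⟩ : ∃ u, L *ᵥ u = fun i => (S - r i) * q i := by
    refine exists_mulVec_eq_of_card_eq_rank_add_one (by simp [hM.rank_eq hirr hq hLq])
      (Function.ne_iff.2 ⟨0, one_ne_zero⟩) (const_one_vecMul_eq_zero hcol) ?_
    simp only [dotProduct, one_mul, sub_mul]
    rw [Finset.sum_sub_distrib, ← Finset.mul_sum, hqs]
    simp [S, mul_comm]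
  filter_upwards [eventually_gt_atTop 0, eventually_forall_pos_add_inv_mul hq u,
    eventually_forall_pos_add_inv_mul (fun i => mul_pos (sub_pos.2 ha) (hq i))
      fun i => (r i - a) * u i] with m hm hv hgap
  obtain ⟨μ, hμ, hle⟩ := (hM.diagonal_add_smul r hm.le).exists_le_re_of_le_mulVec
    (v := q + m⁻¹ • u) hv (c := a) fun i => by
      have hi : ((diagonal r + m • L) *ᵥ (q + m⁻¹ • u)) i =
          r i * (q i + m⁻¹ * u i) + (S - r i) * q i := by
        simp [add_mulVec, mulVec_add, mulVec_smul, smul_mulVec, hLq, hu, mulVec_diagonal,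
          inv_mul_cancel_left₀ hm.ne']
        ring
      rw [hi]
      simp only [Pi.smul_apply, Pi.add_apply, smul_eq_mul]
      linarith [hgap i]
  exact hle.trans (re_le_specAbscissa hμ)

theorem eventually_specAbscissa_le (hM : Metzler L) (hirr : Irred L)
    (hcol : ∀ j, ∑ i, L i j = 0) (hq : ∀ i, 0 < q i) (hLq : L *ᵥ q = 0) (hqs : ∑ i, q i = 1)
    {b : ℝ} (hb : ∑ i, q i * r i < b) :
    ∀ᶠ m : ℝ in atTop, specAbscissa (diagonal r + m • L) ≤ b := by
  set S := ∑ i, q i * r i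
  obtain ⟨u, hu⟩ : ∃ u, u ᵥ* L = fun j => S - r j := by
    simp_rw [← mulVec_transpose]
    refine exists_mulVec_eq_of_card_eq_rank_add_one
      (by simp [rank_transpose, hM.rank_eq hirr hq hLq])
      (fun h => (hq 0).ne' (congrFun h 0)) (by rw [vecMul_transpose, hLq]) ?_
    simp only [dotProduct, mul_sub]
    rw [Finset.sum_sub_distrib, ← Finset.sum_mul, hqs]
    simp [S]
  filter_upwards [eventually_gt_atTop 0, eventually_forall_pos_add_inv_mul (fun _ => one_pos) u,
    eventually_forall_pos_add_inv_mul (fun _ => sub_pos.2 hb) fun j => (b - r j) * u j]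
    with m hm hw hgap
  refine specAbscissa_le fun μ hμ => (hM.diagonal_add_smul r hm.le).re_le_of_vecMul_le
    (w := (fun _ => 1) + m⁻¹ • u) hw (fun j => ?_) hμ
  have hj : (((fun _ => 1) + m⁻¹ • u) ᵥ* (diagonal r + m • L)) j =
      (1 + m⁻¹ * u j) * r j + (S - r j) := by
    simp [vecMul_add, add_vecMul, vecMul_smul, smul_vecMul, const_one_vecMul_eq_zero hcol, hu,
      vecMul_diagonal, mul_inv_cancel_left₀ hm.ne']
    ring
  rw [hj]
  simp only [Pi.smul_apply, Pi.add_apply, smul_eq_mul]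
  linarith [hgap j]

end Asymptotics

theorem stmt10 {n : ℕ} (r : Fin (n + 1) → ℝ) (L : Matrix (Fin (n + 1)) (Fin (n + 1)) ℝ)
    (hM : Metzler L) (hirr : Irred L) (hcol : ∀ j, ∑ i, L i j = 0)
    (q : Fin (n + 1) → ℝ) (hq : ∀ i, 0 < q i) (hLq : L.mulVec q = 0)
    (hqs : ∑ i, q i = 1) :
    Filter.Tendsto (fun m : ℝ => specAbscissa (Matrix.diagonal r + m • L))
      Filter.atTop (nhds (∑ i, q i * r i)) := by
  refine tendsto_order.2 ⟨fun a ha => ?_, fun b hb => ?_⟩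
  · obtain ⟨a', haa', ha'⟩ := exists_between ha
    filter_upwards [eventually_le_specAbscissa hM hirr hcol hq hLq hqs ha'] with m hm
    exact haa'.trans_le hm
  · obtain ⟨b', hb', hbb'⟩ := exists_between hb
    filter_upwards [eventually_specAbscissa_le hM hirr hcol hq hLq hqs hb'] with m hm
    exact hm.trans_lt hbb'
end

section
/- Consider the ±1 two-patch model with constant symmetric migration m and piecewise constant rates: r_1 = 1−ε on [0,½), −1−ε on [½,1), and r_2 swapped, with 0 < ε < 1. Then the slow-regime limit of the growth rate is Λ(m,∞) = −ε + √(1+m²) − m; in particular Λ(m,∞) > 0 if and only if m < (1−ε²)/(2ε). -/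
/-!
Both halves of the period give the symmetric matrix `!![r₁ - m, m; m, r₂ - m]` with
`{r₁, r₂} = {1 - ε, -1 - ε}`, whose characteristic polynomial splits over `ℝ` with largest root
`-ε - m + √(1 + m²)`. The integrand is therefore constant, and the sign condition reduces to
`(ε + m)² < 1 + m²`.
-/

open Matrix

open Polynomial

lemma specAbscissa_of_charpoly_eq {n : ℕ} {A : Matrix (Fin n) (Fin n) ℝ} {s₁ s₂ : ℝ}
    (hA : A.charpoly = (X - C s₁) * (X - C s₂)) : specAbscissa A = max s₁ s₂ := by
  have hmap : (A.map (fun a => (a : ℂ))).charpoly = (X - C (s₁ : ℂ)) * (X - C (s₂ : ℂ)) := by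
    rw [show (fun a : ℝ => (a : ℂ)) = Complex.ofRealHom from rfl, charpoly_map, hA]
    simp
  have hroots : {t : ℝ | ∃ μ : ℂ, (A.map (fun a => (a : ℂ))).charpoly.IsRoot μ ∧ t = μ.re}
      = {s₁, s₂} := by
    ext t
    simp only [hmap, IsRoot.def, eval_mul, eval_sub, eval_X, eval_C, mul_eq_zero, sub_eq_zero,
      Set.mem_ofPred_eq, Set.mem_insert_iff, Set.mem_singleton_iff]
    constructor
    · rintro ⟨μ, rfl | rfl, rfl⟩ <;> simp
    · rintro (rfl | rfl)
      exacts [⟨_, .inl rfl, rfl⟩, ⟨_, .inr rfl, rfl⟩]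
  rw [specAbscissa, hroots, csSup_pair, max_def']

lemma charpoly_symm_fin_two (a b c : ℝ) :
    (!![a, c; c, b]).charpoly
      = (X - C ((a + b) / 2 + √(((a - b) / 2) ^ 2 + c ^ 2)))
        * (X - C ((a + b) / 2 - √(((a - b) / 2) ^ 2 + c ^ 2))) := by
  have hd : √(((a - b) / 2) ^ 2 + c ^ 2) ^ 2 = ((a - b) / 2) ^ 2 + c ^ 2 :=
    Real.sq_sqrt (by positivity)
  set d := √(((a - b) / 2) ^ 2 + c ^ 2)
  have htrace : C (a + b) = C ((a + b) / 2 + d) + C ((a + b) / 2 - d) := by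
    rw [← map_add]; ring_nf
  have hdet : C (a * b - c * c) = C ((a + b) / 2 + d) * C ((a + b) / 2 - d) := by
    rw [← map_mul]; congr 1; linear_combination hd
  rw [charpoly_fin_two, trace_fin_two_of, det_fin_two_of, htrace, hdet]
  ring

lemma specAbscissa_symm_fin_two (a b c : ℝ) :
    specAbscissa !![a, c; c, b] = (a + b) / 2 + √(((a - b) / 2) ^ 2 + c ^ 2) := by
  rw [specAbscissa_of_charpoly_eq (charpoly_symm_fin_two a b c), max_eq_left]
  linarith [Real.sqrt_nonneg (((a - b) / 2) ^ 2 + c ^ 2)]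

lemma diagonal_add_smul_laplacian (x y m : ℝ) :
    diagonal ![x, y] + m • !![-1, 1; 1, -1] = !![x - m, m; m, y - m] := by
  ext i j
  fin_cases i <;> fin_cases j <;> simp [sub_eq_add_neg]

lemma specAbscissa_diagonal_add_smul_laplacian (x y m : ℝ) :
    specAbscissa (diagonal ![x, y] + m • !![-1, 1; 1, -1])
      = (x + y) / 2 - m + √(((x - y) / 2) ^ 2 + m ^ 2) := by
  rw [diagonal_add_smul_laplacian, specAbscissa_symm_fin_two]
  ring_nf

lemma neg_add_sqrt_one_add_sq_sub_pos_iff {ε m : ℝ} (hε : 0 < ε) (hm : 0 < m) :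
    0 < -ε + √(1 + m ^ 2) - m ↔ m < (1 - ε ^ 2) / (2 * ε) := by
  calc 0 < -ε + √(1 + m ^ 2) - m ↔ ε + m < √(1 + m ^ 2) := by constructor <;> intro <;> linarith
    _ ↔ (ε + m) ^ 2 < 1 + m ^ 2 := Real.lt_sqrt (by positivity)
    _ ↔ m * (2 * ε) < 1 - ε ^ 2 := by constructor <;> intro <;> linarith
    _ ↔ m < (1 - ε ^ 2) / (2 * ε) := (lt_div_iff₀ (by positivity)).symm

theorem stmt18_general (ε m : ℝ) (hε0 : 0 < ε) (hm : 0 < m) :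
    let L : Matrix (Fin 2) (Fin 2) ℝ := !![-1, 1; 1, -1]
    let r1 : ℝ → ℝ := fun τ => if τ < 1 / 2 then 1 - ε else -1 - ε
    let r2 : ℝ → ℝ := fun τ => if τ < 1 / 2 then -1 - ε else 1 - ε
    (∫ τ in (0 : ℝ)..1, specAbscissa (Matrix.diagonal ![r1 τ, r2 τ] + m • L)) =
      -ε + Real.sqrt (1 + m ^ 2) - m ∧
    (0 < -ε + Real.sqrt (1 + m ^ 2) - m ↔ m < (1 - ε ^ 2) / (2 * ε)) := by
  intro L r1 r2
  have hconst (τ : ℝ) :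
      specAbscissa (diagonal ![r1 τ, r2 τ] + m • L) = -ε + √(1 + m ^ 2) - m := by
    rw [specAbscissa_diagonal_add_smul_laplacian]
    simp only [r1, r2]
    split_ifs <;> ring_nf
  refine ⟨?_, neg_add_sqrt_one_add_sq_sub_pos_iff hε0 hm⟩
  simp [hconst]

theorem stmt18 (ε m : ℝ) (hε0 : 0 < ε) (hε1 : ε < 1) (hm : 0 < m) :
    let L : Matrix (Fin 2) (Fin 2) ℝ := !![-1, 1; 1, -1]
    let r1 : ℝ → ℝ := fun τ => if τ < 1 / 2 then 1 - ε else -1 - ε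
    let r2 : ℝ → ℝ := fun τ => if τ < 1 / 2 then -1 - ε else 1 - ε
    (∫ τ in (0 : ℝ)..1, specAbscissa (Matrix.diagonal ![r1 τ, r2 τ] + m • L)) =
      -ε + Real.sqrt (1 + m ^ 2) - m ∧
    (0 < -ε + Real.sqrt (1 + m ^ 2) - m ↔ m < (1 - ε ^ 2) / (2 * ε)) :=
  stmt18_general ε m hε0 hm
end

section
/- Let A and B be the 3×3 Metzler matrices A = [[−1,0,0],[10,−1,0],[0,0,−10]] and B = [[−10,0,10],[0,−10,0],[0,10,−1]]. Then λ_max(A) < 0, λ_max(B) < 0, and λ_max((A+B)/2) < 0, yet the matrix e^A e^B has spectral radius strictly greater than 1. -/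
open Matrix

/-- Spectral radius of a real matrix: the supremum of the moduli of its complex eigenvalues. -/
noncomputable def specRadius {n : ℕ} (A : Matrix (Fin n) (Fin n) ℝ) : ℝ :=
  sSup {t : ℝ | ∃ μ : ℂ, (A.map (fun a => (a : ℂ))).charpoly.IsRoot μ ∧ t = ‖μ‖}

open Polynomial NormedSpace Filter

/-!
The three spectral abscissae are read off explicit characteristic polynomials: `A` and `B` have
eigenvalues `-1, -1, -10` and `-10, -10, -1`, while `(A + B) / 2 = -11/2 • 1 + 5 • P` with `P` a
cyclic permutation matrix, so its eigenvalues lie on the circle `|μ + 11/2| = 5`, whose real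
parts are at most `-1/2`. For the product, `e^A` and `e^B` are computed in closed form (`A` is a
diagonal matrix plus a commuting square-zero one, `B` is conjugate to such a matrix), and
`det (1 - e^A e^B) < 0`. Since `det (1 - M)` is the value at `1` of the monic characteristic
polynomial of `M`, that polynomial has a real root larger than `1`.
-/

theorem exp_eq_one_add_of_mul_self_eq_zero {𝔸 : Type*} [Ring 𝔸] [Algebra ℚ 𝔸]
    [TopologicalSpace 𝔸] [IsTopologicalRing 𝔸] [T2Space 𝔸] {x : 𝔸} (hx : x * x = 0) :
    exp x = 1 + x := by
  have hpow : ∀ k ∉ Finset.range 2, ((k.factorial : ℚ)⁻¹ • x ^ k) = 0 := fun k hk => by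
    obtain ⟨j, rfl⟩ := Nat.exists_eq_add_of_le (not_lt.mp (Finset.mem_range.not.mp hk))
    rw [pow_add, sq, hx, zero_mul, smul_zero]
  rw [exp_eq_tsum ℚ]
  dsimp only
  rw [tsum_eq_sum hpow]
  simp [Finset.sum_range_succ]

theorem Polynomial.Monic.exists_isRoot_gt_of_eval_neg {p : ℝ[X]} (hp : p.Monic) {a : ℝ}
    (ha : p.eval a < 0) : ∃ x, a < x ∧ p.IsRoot x := by
  have hdeg : 0 < p.degree := hp.degree_pos.mpr (by rintro rfl; norm_num at ha)
  obtain ⟨b, hb, hab⟩ := ((tendsto_atTop_of_leadingCoeff_nonneg p hdeg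
    (hp.leadingCoeff ▸ zero_le_one)).eventually_gt_atTop 0 |>.and (eventually_gt_atTop a)).exists
  obtain ⟨x, hx, hroot⟩ := intermediate_value_Ioo hab.le p.continuous.continuousOn ⟨ha, hb⟩
  exact ⟨x, hx.1, hroot⟩

theorem specAbscissa_neg_of_forall_re_neg {n : ℕ} [NeZero n] (A : Matrix (Fin n) (Fin n) ℝ)
    (h : ∀ μ : ℂ, (A.map (fun a => (a : ℂ))).charpoly.IsRoot μ → μ.re < 0) :
    specAbscissa A < 0 := by
  set p := (A.map (fun a => (a : ℂ))).charpoly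
  have hS : {t : ℝ | ∃ μ : ℂ, p.IsRoot μ ∧ t = μ.re} = Complex.re '' {μ | p.IsRoot μ} := by
    ext; simp [eq_comm]
  obtain ⟨μ₀, hμ₀⟩ := IsAlgClosed.exists_root p (by
    rw [charpoly_degree_eq_dim]; simp [NeZero.ne n])
  unfold specAbscissa
  rw [hS]
  obtain ⟨μ, hμ, hsup⟩ := (Set.Nonempty.image Complex.re ⟨μ₀, hμ₀⟩).csSup_mem
    ((finite_setOfPred_isRoot (charpoly_monic _).ne_zero).image _)
  exact hsup ▸ h μ hμ

theorem abs_le_specRadius_of_isRoot_charpoly {n : ℕ} (A : Matrix (Fin n) (Fin n) ℝ) {x : ℝ}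
    (hx : A.charpoly.IsRoot x) : |x| ≤ specRadius A := by
  have hxC : (A.map (fun a => (a : ℂ))).charpoly.IsRoot x := by
    rw [show (fun a : ℝ => (a : ℂ)) = Complex.ofRealHom from rfl, charpoly_map]
    exact hx.map
  refine le_csSup ?_ ⟨x, hxC, (Complex.norm_real x).symm⟩
  have hfin := finite_setOfPred_isRoot (A.map (fun a => (a : ℂ))).charpoly_monic.ne_zero
  refine (hfin.image (‖·‖ : ℂ → ℝ)).bddAbove.mono ?_
  rintro t ⟨μ, hμ, rfl⟩
  exact ⟨μ, hμ, rfl⟩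

theorem one_lt_specRadius_of_det_one_sub_neg {n : ℕ} (M : Matrix (Fin n) (Fin n) ℝ)
    (hM : (1 - M).det < 0) : 1 < specRadius M := by
  obtain ⟨x, hx, hroot⟩ := M.charpoly_monic.exists_isRoot_gt_of_eval_neg
    (a := 1) (by rwa [eval_charpoly, scalar_apply, diagonal_one])
  exact hx.trans_le ((le_abs_self x).trans (abs_le_specRadius_of_isRoot_charpoly M hroot))

theorem Matrix.exp_diagonal_add_of_mul_self_eq_zero {m : Type*} [Fintype m] [DecidableEq m]
    (d : m → ℝ) {N : Matrix m m ℝ} (hN : N * N = 0) (hdN : Commute (diagonal d) N) :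
    exp (diagonal d + N) = diagonal (fun i => Real.exp (d i)) * (1 + N) := by
  rw [Matrix.exp_add_of_commute _ _ hdN, Matrix.exp_diagonal,
    exp_eq_one_add_of_mul_self_eq_zero hN]
  congr 2
  funext i
  simp [Real.exp_eq_exp_ℝ]

theorem Matrix.exp_conj_of_mul_eq_one {m 𝔸 : Type*} [Fintype m] [DecidableEq m]
    [NormedCommRing 𝔸] [NormedAlgebra ℚ 𝔸] [CompleteSpace 𝔸]
    {U V : Matrix m m 𝔸} (hUV : U * V = 1) (A : Matrix m m 𝔸) :
    exp (U * A * V) = U * exp A * V := by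
  rw [← inv_eq_right_inv hUV]
  exact exp_conj U A (IsUnit.of_mul_eq_one V hUV)

def metzlerA : Matrix (Fin 3) (Fin 3) ℝ := !![-1, 0, 0; 10, -1, 0; 0, 0, -10]
def metzlerB : Matrix (Fin 3) (Fin 3) ℝ := !![-10, 0, 10; 0, -10, 0; 0, 10, -1]

theorem exp_metzlerA : exp metzlerA =
    !![Real.exp (-1), 0, 0; 10 * Real.exp (-1), Real.exp (-1), 0; 0, 0, Real.exp (-10)] := by
  have hsplit : metzlerA = diagonal ![-1, -1, -10] + !![0, 0, 0; 10, 0, 0; 0, 0, 0] := by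
    ext i j; fin_cases i <;> fin_cases j <;> simp [metzlerA]
  rw [hsplit, exp_diagonal_add_of_mul_self_eq_zero] <;>
    ext i j <;> fin_cases i <;> fin_cases j <;> simp [mul_apply, Fin.sum_univ_three, mul_comm]

theorem exp_metzlerB : exp metzlerB =
    !![Real.exp (-10), (100 * Real.exp (-1) - 1000 * Real.exp (-10)) / 81,
        (10 * Real.exp (-1) - 10 * Real.exp (-10)) / 9;
      0, Real.exp (-10), 0;
      0, (10 * Real.exp (-1) - 10 * Real.exp (-10)) / 9, Real.exp (-1)] := by
  -- The columns of `U` are a Jordan chain of `metzlerB` for `-10` and an eigenvector for `-1`.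
  set U : Matrix (Fin 3) (Fin 3) ℝ := !![1, 0, 10; 0, -9/100, 0; 0, 1/10, 9]
  set V : Matrix (Fin 3) (Fin 3) ℝ := !![1, -100/81, -10/9; 0, -100/9, 0; 0, 10/81, 1/9]
  have hUV : U * V = 1 := by
    rw [one_fin_three]
    norm_num [U, V, mul_fin_three]
  have hjordan : metzlerB = U * !![-10, 1, 0; 0, -10, 0; 0, 0, -1] * V := by
    norm_num [metzlerB, U, V, mul_fin_three]
  have hexpJ : exp !![-10, 1, 0; 0, -10, 0; 0, 0, -1] =
      !![Real.exp (-10), Real.exp (-10), 0; 0, Real.exp (-10), 0; 0, 0, Real.exp (-1)] := by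
    have hsplit : (!![-10, 1, 0; 0, -10, 0; 0, 0, -1] : Matrix (Fin 3) (Fin 3) ℝ) =
        diagonal ![-10, -10, -1] + !![0, 1, 0; 0, 0, 0; 0, 0, 0] := by
      ext i j; fin_cases i <;> fin_cases j <;> simp
    rw [hsplit, exp_diagonal_add_of_mul_self_eq_zero] <;>
      ext i j <;> fin_cases i <;> fin_cases j <;> simp [mul_apply, Fin.sum_univ_three]
  rw [hjordan, exp_conj_of_mul_eq_one hUV, hexpJ]
  norm_num [U, V, mul_fin_three]
  and_intros <;> ring

theorem det_one_sub_exp_metzlerA_mul_exp_metzlerB :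
    (1 - exp metzlerA * exp metzlerB).det =
      1 - 1000 / 81 * Real.exp (-1) ^ 2 + 9757 / 81 * Real.exp (-1) * Real.exp (-10)
        - 7757 / 81 * Real.exp (-1) ^ 2 * Real.exp (-10) ^ 2
        - 1000 / 81 * Real.exp (-1) * Real.exp (-10) ^ 3
        - Real.exp (-1) ^ 3 * Real.exp (-10) ^ 3 := by
  rw [exp_metzlerA, exp_metzlerB, one_fin_three, mul_fin_three, det_fin_three]
  simp
  ring

theorem det_one_sub_exp_metzlerA_mul_exp_metzlerB_neg :
    (1 - exp metzlerA * exp metzlerB).det < 0 := by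
  have hb_small : Real.exp (-10) < 0.001 :=
    calc Real.exp (-10) = Real.exp (-1) ^ 10 := by rw [← Real.exp_nat_mul]; norm_num
      _ < (1 / 2) ^ 10 := by gcongr; exact Real.exp_neg_one_lt_half
      _ < 0.001 := by norm_num
  have ha_lower := Real.exp_neg_one_gt_d9
  have ha_upper := Real.exp_neg_one_lt_half
  have hb_pos := Real.exp_pos (-10)
  rw [det_one_sub_exp_metzlerA_mul_exp_metzlerB]
  set a := Real.exp (-1)
  set b := Real.exp (-10)
  have ha_pos : 0 < a := Real.exp_pos (-1)
  nlinarith [mul_pos ha_pos hb_pos, pow_pos ha_pos 3, pow_pos hb_pos 3,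
    mul_pos (pow_pos ha_pos 2) (pow_pos hb_pos 2)]

theorem isRoot_charpoly_map_metzlerA_iff (μ : ℂ) :
    (metzlerA.map (fun a => (a : ℂ))).charpoly.IsRoot μ ↔ μ = -1 ∨ μ = -10 := by
  rw [IsRoot, eval_charpoly, det_fin_three]
  simp [metzlerA, add_eq_zero_iff_eq_neg]

theorem isRoot_charpoly_map_metzlerB_iff (μ : ℂ) :
    (metzlerB.map (fun a => (a : ℂ))).charpoly.IsRoot μ ↔ μ = -10 ∨ μ = -1 := by
  rw [IsRoot, eval_charpoly, det_fin_three]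
  simp [metzlerB, add_eq_zero_iff_eq_neg]

theorem eval_charpoly_map_half_metzlerA_add_metzlerB (μ : ℂ) :
    (((2 : ℝ)⁻¹ • (metzlerA + metzlerB)).map (fun a => (a : ℂ))).charpoly.eval μ =
      (μ + 11 / 2) ^ 3 - 5 ^ 3 := by
  rw [eval_charpoly, det_fin_three]
  simp [metzlerA, metzlerB]
  ring

theorem specAbscissa_metzlerA : specAbscissa metzlerA < 0 :=
  specAbscissa_neg_of_forall_re_neg _ fun μ hμ => by
    rcases (isRoot_charpoly_map_metzlerA_iff μ).mp hμ with rfl | rfl <;> norm_num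

theorem specAbscissa_metzlerB : specAbscissa metzlerB < 0 :=
  specAbscissa_neg_of_forall_re_neg _ fun μ hμ => by
    rcases (isRoot_charpoly_map_metzlerB_iff μ).mp hμ with rfl | rfl <;> norm_num

theorem specAbscissa_half_metzlerA_add_metzlerB :
    specAbscissa ((2 : ℝ)⁻¹ • (metzlerA + metzlerB)) < 0 := by
  refine specAbscissa_neg_of_forall_re_neg _ fun μ hμ => ?_
  rw [IsRoot, eval_charpoly_map_half_metzlerA_add_metzlerB, sub_eq_zero] at hμ
  have hnorm : ‖μ + 11 / 2‖ = 5 := by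
    have hcube : ‖μ + 11 / 2‖ ^ 3 = 5 ^ 3 := by rw [← norm_pow, hμ]; norm_num
    exact (pow_left_inj₀ (norm_nonneg _) (by norm_num) (by norm_num)).mp hcube
  have hre : (μ + 11 / 2).re ≤ 5 := hnorm ▸ Complex.re_le_norm _
  norm_num at hre
  linarith

theorem stmt19 :
    let A : Matrix (Fin 3) (Fin 3) ℝ := !![-1, 0, 0; 10, -1, 0; 0, 0, -10]
    let B : Matrix (Fin 3) (Fin 3) ℝ := !![-10, 0, 10; 0, -10, 0; 0, 10, -1]
    specAbscissa A < 0 ∧ specAbscissa B < 0 ∧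
    specAbscissa ((2 : ℝ)⁻¹ • (A + B)) < 0 ∧
    1 < specRadius (NormedSpace.exp A * NormedSpace.exp B) :=
  ⟨specAbscissa_metzlerA, specAbscissa_metzlerB, specAbscissa_half_metzlerA_add_metzlerB,
    one_lt_specRadius_of_det_one_sub_neg _ det_one_sub_exp_metzlerA_mul_exp_metzlerB_neg⟩
end
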